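/- arXiv:1311.7307 — 2 statements merged into one kernel-verified Lean document; each statement's English description precedes it below -/
import Mathlib

section
/- Let φ = c₁ ∧ … ∧ c_k be a 3CNF formula over variables x₁,…,x_n. Over the alphabet {d₁,…,d_k, v₁,…,v_n}, let w_φ be the unordered word containing each symbol exactly once, and let E_φ = X₁ || … || X_n where, for 1 ≤ j ≤ n, X_j = (v_j || d_{t₁} || … || d_{t_l})? || (v_j || d_{f₁} || … || d_{f_m})? with d_{t₁},…,d_{t_l} the symbols of the clauses that use the positive literal x_j and d_{f₁},…,d_{f_m} the symbols of the clauses that use the literal ¬x_j. Then φ has a valuation making exactly one literal of each clause true (a 1-in-3 valuation) if and only if w_φ ∈ L(E_φ). -/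
set_option autoImplicit false

universe u v w

/-- An unordered word over an alphabet `σ`: a multiset over `σ`,
viewed as a function giving the number of occurrences of each symbol. -/
def UWord (σ : Type u) : Type u := σ → ℕ

/-- The empty unordered word `ε`. -/
def UWord.zero {σ : Type u} : UWord σ := fun _ => 0

/-- Unordered concatenation (multiset union) of two unordered words. -/
def UWord.add {σ : Type u} (w₁ w₂ : UWord σ) : UWord σ := fun a => w₁ a + w₂ a

/-- The unordered word consisting of a single occurrence of `a`. -/
def UWord.single {σ : Type u} [DecidableEq σ] (a : σ) : UWord σ :=
  fun b => if b = a then 1 else 0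

/-- Unordered concatenation of a list of unordered words. -/
def listSum {σ : Type u} (l : List (UWord σ)) : UWord σ := l.foldr UWord.add UWord.zero

/-- Unordered regular expressions (UREs):
`E ::= ε | a | E* | (E|E) | (E||E)`. -/
inductive URE (σ : Type u) : Type u where
  | eps : URE σ
  | sym : σ → URE σ
  | star : URE σ → URE σ
  | alt : URE σ → URE σ → URE σ
  | conc : URE σ → URE σ → URE σ

/-- The language of unordered words defined by a URE. -/
def URE.lang {σ : Type u} [DecidableEq σ] : URE σ → Set (UWord σ)
  | .eps => {UWord.zero}
  | .sym a => {UWord.single a}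
  | .star E => {w | ∃ l : List (UWord σ), (∀ x ∈ l, x ∈ URE.lang E) ∧ w = listSum l}
  | .alt E₁ E₂ => URE.lang E₁ ∪ URE.lang E₂
  | .conc E₁ E₂ => {w | ∃ w₁ ∈ URE.lang E₁, ∃ w₂ ∈ URE.lang E₂, w = w₁.add w₂}

/-- The macro `E? = E | ε`. -/
def URE.opt {σ : Type u} (E : URE σ) : URE σ := URE.alt E URE.eps

/-- The macro `E⁺ = E || E*`. -/
def URE.plus {σ : Type u} (E : URE σ) : URE σ := URE.conc E (URE.star E)

/-- Unordered concatenation `E₁ || ⋯ || E_k` of a list of UREs. -/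
def URE.concList {σ : Type u} (l : List (URE σ)) : URE σ := l.foldr URE.conc URE.eps

/-- Disjunction `E₁ | ⋯ | E_k` of a (nonempty) list of UREs. -/
def URE.altList {σ : Type u} : List (URE σ) → URE σ
  | [] => URE.eps
  | [E] => E
  | E :: F :: rest => URE.alt E (URE.altList (F :: rest))

/-- The language of the interval multiplicity `E^[lo,hi]` (finite bounds):
unordered concatenations of between `lo` and `hi` words of `L(E)`. -/
def URE.langIter {σ : Type u} [DecidableEq σ] (E : URE σ) (lo hi : ℕ) : Set (UWord σ) :=
  {w | ∃ l : List (UWord σ),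
      (∀ x ∈ l, x ∈ URE.lang E) ∧ lo ≤ l.length ∧ l.length ≤ hi ∧ w = listSum l}

/- The alphabet `{d₁,…,d_k, v₁,…,v_n}`: `Sum.inl i` is the symbol `d_i` of the clause
`c_i`, and `Sum.inr j` is the symbol `v_j` of the variable `x_j`.  A 3CNF formula
`φ = c₁ ∧ … ∧ c_k` over variables `x₁,…,x_n` is given by its sets of literals
`lits i` (a literal is a pair of a variable and a sign). -/

/-- The URE `d_i`. -/
def dsym (k n : ℕ) (i : Fin k) : URE (Fin k ⊕ Fin n) := URE.sym (Sum.inl i)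

/-- The URE `v_j`. -/
def vsym (k n : ℕ) (j : Fin n) : URE (Fin k ⊕ Fin n) := URE.sym (Sum.inr j)

/-- `X_j = (v_j || d_{t₁} || … || d_{t_l})? || (v_j || d_{f₁} || … || d_{f_m})?` where
`d_{t₁},…,d_{t_l}` correspond to the clauses using the literal `x_j` and
`d_{f₁},…,d_{f_m}` to the clauses using the literal `¬x_j`. -/
def X8 {k n : ℕ} (lits : Fin k → Finset (Fin n × Bool)) (j : Fin n) :
    URE (Fin k ⊕ Fin n) :=
  URE.conc
    (URE.opt (URE.concList
      (vsym k n j :: ((List.finRange k).filter (fun i => (j, true) ∈ lits i)).map (dsym k n))))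
    (URE.opt (URE.concList
      (vsym k n j :: ((List.finRange k).filter (fun i => (j, false) ∈ lits i)).map (dsym k n))))

/-- `E_φ = X₁ || … || X_n`. -/
def E8 {k n : ℕ} (lits : Fin k → Finset (Fin n × Bool)) : URE (Fin k ⊕ Fin n) :=
  URE.concList ((List.finRange n).map (X8 lits))

/-- `w_φ = d₁ … d_k v₁ … v_n`: every symbol of the alphabet occurs exactly once. -/
def w8 (k n : ℕ) : UWord (Fin k ⊕ Fin n) := fun _ => 1

/-! A word of `L(E_φ)` is determined by choosing, for every variable `x_j`, which of the two
optional factors of `X_j` to take. In `w_φ` the symbol `v_j` occurs exactly once, so exactly one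
factor is taken for each `j`, and this choice is a valuation. Each `d_i` also occurs exactly once,
so exactly one taken factor mentions the clause `c_i`: exactly one literal of `c_i` is true. -/

namespace URE

@[simp] theorem concList_cons {σ : Type u} (E : URE σ) (l : List (URE σ)) :
    concList (E :: l) = conc E (concList l) := rfl

variable {σ : Type u} [DecidableEq σ]

@[simp] theorem mem_lang_sym {a : σ} {w : UWord σ} : w ∈ (sym a).lang ↔ w = UWord.single a :=
  Iff.rfl

@[simp] theorem mem_lang_conc {E F : URE σ} {w : UWord σ} :
    w ∈ (conc E F).lang ↔ ∃ w₁ ∈ E.lang, ∃ w₂ ∈ F.lang, w = w₁.add w₂ := Iff.rfl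

@[simp] theorem mem_lang_opt {E : URE σ} {w : UWord σ} :
    w ∈ E.opt.lang ↔ w ∈ E.lang ∨ w = UWord.zero := Iff.rfl

theorem mem_lang_concList_map_sym {l : List σ} {w : UWord σ} :
    w ∈ (concList (l.map sym)).lang ↔ w = fun a => Multiset.count a l := by
  induction l generalizing w with
  | nil => rfl
  | cons b l ih =>
    have hcount : (fun a => Multiset.count a ↑(b :: l)) =
        (UWord.single b).add fun a => Multiset.count a l := by
      funext a
      rw [← Multiset.cons_coe, Multiset.count_cons, add_comm]
      rfl
    simp only [List.map_cons, concList_cons, mem_lang_conc, mem_lang_sym, ih, hcount]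
    exact ⟨fun ⟨_, h₁, _, h₂, h⟩ => h₁ ▸ h₂ ▸ h, fun h => ⟨_, rfl, _, rfl, h⟩⟩

theorem mem_lang_concList_map {α : Type v} {F : α → URE σ} {L : List α} (hL : L.Nodup)
    {w : UWord σ} :
    w ∈ (concList (L.map F)).lang ↔
      ∃ g : α → UWord σ, (∀ a ∈ L, g a ∈ (F a).lang) ∧ w = listSum (L.map g) := by
  classical
  induction L generalizing w with
  | nil => exact ⟨fun h => ⟨fun _ => UWord.zero, by simp, h⟩, fun ⟨_, _, h⟩ => h⟩
  | cons a L ih =>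
    obtain ⟨haL, hL⟩ := List.nodup_cons.1 hL
    simp only [List.map_cons, concList_cons, mem_lang_conc, ih hL]
    constructor
    · rintro ⟨w₁, h₁, _, ⟨g, hg, rfl⟩, rfl⟩
      have hgL : L.map (Function.update g a w₁) = L.map g :=
        List.map_congr_left fun b hb => Function.update_of_ne (ne_of_mem_of_not_mem hb haL) _ _
      refine ⟨Function.update g a w₁, ?_, by simp [listSum, hgL]⟩
      rintro b (_ | ⟨_, hb⟩)
      · simpa using h₁
      · rw [Function.update_of_ne (ne_of_mem_of_not_mem hb haL)]
        exact hg b hb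
    · rintro ⟨g, hg, rfl⟩
      exact ⟨g a, hg a List.mem_cons_self, _, ⟨g, fun b hb => hg b (.tail a hb), rfl⟩, rfl⟩

end URE

theorem listSum_apply {σ : Type u} (l : List (UWord σ)) (a : σ) :
    listSum l a = (l.map fun w => w a).sum := by
  induction l with
  | nil => rfl
  | cons w l ih => simp [listSum, UWord.add, ← ih]

theorem listSum_map_finRange_apply {σ : Type u} {n : ℕ} (g : Fin n → UWord σ) (a : σ) :
    listSum ((List.finRange n).map g) a = ∑ j, g j a := by
  rw [listSum_apply, List.map_map, Fin.sum_univ_def]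
  rfl

theorem existsUnique_and_graph_iff {α β : Type*} (p : α × β → Prop) (v : α → β) :
    (∃! ℓ : α × β, p ℓ ∧ v ℓ.1 = ℓ.2) ↔ ∃! a, p (a, v a) := by
  constructor
  · rintro ⟨⟨a, b⟩, ⟨h, hb : v a = b⟩, hu⟩
    subst hb
    exact ⟨a, h, fun a' h' => congrArg Prod.fst (hu (a', v a') ⟨h', rfl⟩)⟩
  · rintro ⟨a, h, hu⟩
    refine ⟨(a, v a), ⟨h, rfl⟩, ?_⟩
    rintro ⟨a', b'⟩ ⟨h', hb' : v a' = b'⟩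
    subst hb'
    rw [hu a' h']

open Finset in
theorem existsUnique_mem_and_eq_iff_card {α β : Type*} [Fintype α] [DecidableEq α]
    [DecidableEq β] (s : Finset (α × β)) (v : α → β) :
    (∃! ℓ : α × β, ℓ ∈ s ∧ v ℓ.1 = ℓ.2) ↔ #{a | (a, v a) ∈ s} = 1 := by
  rw [existsUnique_and_graph_iff, card_eq_one_iff_existsUnique]
  simp

section OneInThree

open Finset

variable {k n : ℕ} (lits : Fin k → Finset (Fin n × Bool))

def literalWord (j : Fin n) (s : Bool) : UWord (Fin k ⊕ Fin n)
  | .inl i => if (j, s) ∈ lits i then 1 else 0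
  | .inr j' => if j' = j then 1 else 0

/-- The words of `L(X_j)`: `a` and `b` say whether the factor for `x_j`, resp. `¬x_j`, is taken. -/
def choiceWord (j : Fin n) (a b : Bool) : UWord (Fin k ⊕ Fin n) := fun x =>
  (if a then literalWord lits j true x else 0) + (if b then literalWord lits j false x else 0)

def selectionWord (A B : Fin n → Bool) : UWord (Fin k ⊕ Fin n) := fun x =>
  ∑ j, choiceWord lits j (A j) (B j) x

theorem mem_lang_literal {j : Fin n} {s : Bool} {w : UWord (Fin k ⊕ Fin n)} :
    w ∈ (URE.concList (vsym k n j ::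
      ((List.finRange k).filter (fun i => (j, s) ∈ lits i)).map (dsym k n))).lang ↔
      w = literalWord lits j s := by
  have hsyms : vsym k n j :: ((List.finRange k).filter (fun i => (j, s) ∈ lits i)).map (dsym k n) =
      (.inr j :: ((List.finRange k).filter (fun i => (j, s) ∈ lits i)).map .inl).map URE.sym := by
    simp only [List.map_cons, List.map_map]; rfl
  have hnodup : (.inr j :: ((List.finRange k).filter (fun i => (j, s) ∈ lits i)).map .inl :
      List (Fin k ⊕ Fin n)).Nodup :=
    List.nodup_cons.2 ⟨by simp, ((List.nodup_finRange k).filter _).map Sum.inl_injective⟩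
  rw [hsyms, URE.mem_lang_concList_map_sym]
  refine Eq.congr_right (funext fun x => ?_)
  rw [Multiset.count_eq_of_nodup (Multiset.coe_nodup.2 hnodup)]
  cases x <;> simp [literalWord, eq_comm]

theorem mem_lang_X8 {j : Fin n} {w : UWord (Fin k ⊕ Fin n)} :
    w ∈ (X8 lits j).lang ↔ ∃ a b : Bool, w = choiceWord lits j a b := by
  simp only [X8, URE.mem_lang_conc, URE.mem_lang_opt, mem_lang_literal]
  constructor
  · rintro ⟨_, rfl | rfl, _, rfl | rfl, rfl⟩
    exacts [⟨true, true, rfl⟩, ⟨true, false, rfl⟩, ⟨false, true, rfl⟩, ⟨false, false, rfl⟩]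
  · rintro ⟨a, b, rfl⟩
    cases a <;> cases b
    exacts [⟨_, .inr rfl, _, .inr rfl, rfl⟩, ⟨_, .inr rfl, _, .inl rfl, rfl⟩,
      ⟨_, .inl rfl, _, .inr rfl, rfl⟩, ⟨_, .inl rfl, _, .inl rfl, rfl⟩]

theorem mem_lang_E8 {w : UWord (Fin k ⊕ Fin n)} :
    w ∈ (E8 lits).lang ↔ ∃ A B : Fin n → Bool, w = selectionWord lits A B := by
  rw [E8, URE.mem_lang_concList_map (List.nodup_finRange n)]
  constructor
  · rintro ⟨g, hg, rfl⟩
    choose A B hAB using fun j => (mem_lang_X8 lits).1 (hg j (List.mem_finRange j))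
    refine ⟨A, B, funext fun x => ?_⟩
    simp only [listSum_map_finRange_apply, hAB, selectionWord]
  · rintro ⟨A, B, rfl⟩
    exact ⟨_, fun j _ => (mem_lang_X8 lits).2 ⟨A j, B j, rfl⟩,
      funext fun x => (listSum_map_finRange_apply (fun j => choiceWord lits j (A j) (B j)) x).symm⟩

theorem selectionWord_inr (A B : Fin n → Bool) (j : Fin n) :
    selectionWord lits A B (.inr j) = (A j).toNat + (B j).toNat := by
  rw [selectionWord,
    Fintype.sum_eq_single j fun j' hj' => by simp [choiceWord, literalWord, hj'.symm]]
  cases A j <;> cases B j <;> simp [choiceWord, literalWord]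

theorem selectionWord_not_inl (A : Fin n → Bool) (i : Fin k) :
    selectionWord lits A (fun j => !A j) (.inl i) = #{j | (j, A j) ∈ lits i} := by
  rw [card_filter]
  refine sum_congr rfl fun j _ => ?_
  cases hA : A j <;> simp [choiceWord, literalWord, hA]

theorem selectionWord_eq_w8_iff (A B : Fin n → Bool) :
    selectionWord lits A B = w8 k n ↔
      B = (fun j => !A j) ∧ ∀ i, #{j | (j, A j) ∈ lits i} = 1 := by
  have hB : selectionWord lits A B = w8 k n → B = fun j => !A j := fun h => funext fun j => by
    have := selectionWord_inr lits A B j ▸ congrFun h (.inr j)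
    cases hA : A j <;> cases hB : B j <;> simp_all [w8]
  constructor
  · intro h
    obtain rfl := hB h
    exact ⟨rfl, fun i => selectionWord_not_inl lits A i ▸ congrFun h (.inl i)⟩
  · rintro ⟨rfl, hcard⟩
    funext x
    rcases x with i | j
    · rw [selectionWord_not_inl, hcard]; rfl
    · rw [selectionWord_inr]; cases A j <;> rfl

end OneInThree

theorem statement8_general (k n : ℕ) (lits : Fin k → Finset (Fin n × Bool)) :
    (∃ v : Fin n → Bool, ∀ i : Fin k,
        ∃! ℓ : Fin n × Bool, ℓ ∈ lits i ∧ v ℓ.1 = ℓ.2) ↔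
      w8 k n ∈ URE.lang (E8 lits) := by
  simp only [existsUnique_mem_and_eq_iff_card, mem_lang_E8, eq_comm (a := w8 k n),
    selectionWord_eq_w8_iff, exists_eq_left]

/-- `φ` has a valuation making exactly one literal of each clause true
(a 1-in-3 valuation) if and only if `w_φ ∈ L(E_φ)`. -/
theorem statement8 (k n : ℕ) (lits : Fin k → Finset (Fin n × Bool))
    (h3 : ∀ i : Fin k, (lits i).card = 3) :
    (∃ v : Fin n → Bool, ∀ i : Fin k,
        ∃! ℓ : Fin n × Bool, ℓ ∈ lits i ∧ v ℓ.1 = ℓ.2) ↔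
      w8 k n ∈ URE.lang (E8 lits) :=
  statement8_general k n lits
end

section
/- Let φ = c₁ ∧ … ∧ c_k be a 3CNF formula over variables x₁,…,x_n in which each variable occurs at most once in each clause, and let E'_φ = (C₁ | … | C_k)^{[0,k−1]} where C_i = (a_{ij₁} | … | a_{ij_p})⁺ with x_{j₁},…,x_{j_p} the variables used by clause c_i, over the alphabet {a_{ij} | clause c_i uses x_j or ¬x_j}. Then for every unordered word w over this alphabet: w ∈ L(E'_φ) if and only if there exists i ∈ {1,…,k} such that none of the symbols occurring in C_i occurs in w. -/
set_option autoImplicit false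

universe u v w

/- The alphabet `{a_{ij}}`: the pair `(i, j) : Fin k × Fin n` is the symbol `a_{ij}`.
The 3CNF formula `φ = c₁ ∧ … ∧ c_k` over variables `x₁,…,x_n` is given by its sets of
literals `lits i` (a literal is a variable together with a sign). -/

/-- The URE `a_{ij}`. -/
def asym (k n : ℕ) (i : Fin k) (j : Fin n) : URE (Fin k × Fin n) := URE.sym (i, j)

/-- The clause `c_i` uses the variable `x_j` (positively or negatively). -/
def usesVar {k n : ℕ} (lits : Fin k → Finset (Fin n × Bool)) (i : Fin k) (j : Fin n) :
    Prop :=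
  (j, true) ∈ lits i ∨ (j, false) ∈ lits i

/-- `X_j = ((a_{t₁j} || … || a_{t_l j}) | (a_{f₁j} || … || a_{f_m j}))` where
`c_{t₁},…,c_{t_l}` are the clauses using the literal `x_j` and `c_{f₁},…,c_{f_m}`
the clauses using `¬x_j`. -/
def X10 {k n : ℕ} (lits : Fin k → Finset (Fin n × Bool)) (j : Fin n) :
    URE (Fin k × Fin n) :=
  URE.alt
    (URE.concList (((List.finRange k).filter (fun i => (j, true) ∈ lits i)).map
      (fun i => asym k n i j)))
    (URE.concList (((List.finRange k).filter (fun i => (j, false) ∈ lits i)).map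
      (fun i => asym k n i j)))

/-- `E_φ = X₁ || … || X_n`. -/
def E10 {k n : ℕ} (lits : Fin k → Finset (Fin n × Bool)) : URE (Fin k × Fin n) :=
  URE.concList ((List.finRange n).map (X10 lits))

/-- `C_i = (a_{ij₁} | … | a_{ij_p})⁺` where `x_{j₁},…,x_{j_p}` are the variables used
by the clause `c_i`. -/
def C10 {k n : ℕ} (lits : Fin k → Finset (Fin n × Bool)) (i : Fin k) :
    URE (Fin k × Fin n) :=
  URE.plus (URE.altList
    (((List.finRange n).filter (fun j => (j, true) ∈ lits i ∨ (j, false) ∈ lits i)).map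
      (fun j => asym k n i j)))

/-- `L(E'_φ)` where `E'_φ = (C₁ | … | C_k)^[0,k−1]`. -/
def E10'lang {k n : ℕ} (lits : Fin k → Finset (Fin n × Bool)) :
    Set (UWord (Fin k × Fin n)) :=
  URE.langIter (URE.altList ((List.finRange k).map (C10 lits))) 0 (k - 1)

/-!
The words of `L(C_i)` are exactly the nonempty words over the symbols `a_{ij}` of row `i`.
A word of `L(E'_φ)` is a sum of at most `k - 1` of them, so by pigeonhole some row of it is
empty. Conversely, if row `i` of `w` is empty, the nonempty rows of `w` are at most `k - 1`
words, each in some `L(C_r)`, and they sum to `w`.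
-/

namespace UWord

variable {σ : Type u}

theorem listSum_apply (l : List (UWord σ)) (a : σ) : listSum l a = (l.map (· a)).sum := by
  induction l with
  | nil => rfl
  | cons x l ih => exact congrArg (x a + ·) ih

theorem exists_mem_apply_ne_zero {l : List (UWord σ)} {a : σ} (h : listSum l a ≠ 0) :
    ∃ x ∈ l, x a ≠ 0 := by
  rw [listSum_apply] at h
  simpa using List.exists_mem_ne_zero_of_sum_ne_zero h

theorem listSum_append (l₁ l₂ : List (UWord σ)) :
    listSum (l₁ ++ l₂) = (listSum l₁).add (listSum l₂) := by
  funext a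
  induction l₁ with
  | nil => exact (Nat.zero_add _).symm
  | cons x l₁ ih => exact (congrArg (x a + ·) ih).trans (Nat.add_assoc _ _ _).symm

theorem listSum_flatMap {α : Type v} (L : List α) (g : α → List (UWord σ)) :
    listSum (L.flatMap g) = listSum (L.map fun c => listSum (g c)) := by
  induction L with
  | nil => rfl
  | cons c L ih => rw [List.flatMap_cons, listSum_append, ih]; rfl

def restrict (w : UWord σ) (p : σ → Prop) [DecidablePred p] : UWord σ :=
  fun a => if p a then w a else 0

theorem listSum_replicate_single [DecidableEq σ] (w : UWord σ) (a : σ) :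
    listSum (List.replicate (w a) (single a)) = w.restrict (· = a) := by
  funext b
  by_cases h : b = a
  · subst h; simp [listSum_apply, single, restrict]
  · simp [listSum_apply, single, restrict, h]

theorem listSum_map_restrict {ι : Type v} [DecidableEq ι] (w : UWord σ) (f : σ → ι)
    {L : List ι} (hL : L.Nodup) (hw : ∀ a, w a ≠ 0 → f a ∈ L) :
    listSum (L.map fun c => w.restrict (f · = c)) = w := by
  funext a
  rw [listSum_apply, List.map_map, ← List.sum_toFinset _ hL]
  simp only [Function.comp_def, restrict, Finset.sum_ite_eq, List.mem_toFinset]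
  split_ifs with ha
  · rfl
  · exact (not_not.1 (mt (hw a) ha)).symm

theorem card_le_length_of_forall_fiber {ι : Type v} [Fintype ι] (f : σ → ι)
    {l : List (UWord σ)} (hl : ∀ x ∈ l, ∃ c, ∀ a, x a ≠ 0 → f a = c)
    (hw : ∀ c, ∃ a, f a = c ∧ listSum l a ≠ 0) :
    Fintype.card ι ≤ l.length := by
  classical
  choose a hfa hwa using hw
  choose x hxl hxa using fun c => exists_mem_apply_ne_zero (hwa c)
  have hinj : Function.Injective x := by
    intro c c' h
    obtain ⟨r, hr⟩ := hl (x c) (hxl c)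
    rw [← hfa c, ← hfa c', hr _ (hxa c), hr _ (h ▸ hxa c')]
  calc Fintype.card ι ≤ l.toFinset.card :=
        Finset.card_le_card_of_injOn x (fun c _ => List.mem_toFinset.2 (hxl c)) hinj.injOn
    _ ≤ l.length := List.toFinset_card_le l

end UWord

namespace URE

variable {σ : Type u} [DecidableEq σ]

theorem mem_lang_altList {l : List (URE σ)} (hl : l ≠ []) {w : UWord σ} :
    w ∈ (altList l).lang ↔ ∃ E ∈ l, w ∈ E.lang := by
  induction l with
  | nil => exact absurd rfl hl
  | cons E t ih =>
    cases t with
    | nil => simp [altList]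
    | cons F r =>
      simp only [altList, lang, Set.mem_union, ih (List.cons_ne_nil F r),
        List.exists_mem_cons_iff]

theorem mem_lang_plus {E : URE σ} {w : UWord σ} :
    w ∈ E.plus.lang ↔
      ∃ l : List (UWord σ), l ≠ [] ∧ (∀ x ∈ l, x ∈ E.lang) ∧ w = listSum l := by
  constructor
  · rintro ⟨x, hx, _, ⟨l, hl, rfl⟩, rfl⟩
    exact ⟨x :: l, List.cons_ne_nil x l, List.forall_mem_cons.2 ⟨hx, hl⟩, rfl⟩
  · rintro ⟨_ | ⟨x, l⟩, hne, hl, rfl⟩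
    · exact absurd rfl hne
    · obtain ⟨hx, hl⟩ := List.forall_mem_cons.1 hl
      exact ⟨x, hx, listSum l, ⟨l, hl, rfl⟩, rfl⟩

theorem mem_lang_altList_map_sym {s : List σ} (hs : s ≠ []) {w : UWord σ} :
    w ∈ (altList (s.map sym)).lang ↔ ∃ a ∈ s, w = UWord.single a := by
  simp [mem_lang_altList (List.map_eq_nil_iff.not.2 hs), lang, eq_comm]

theorem mem_of_mem_lang_plus_altList_sym {s : List σ} {w : UWord σ}
    (hw : w ∈ (altList (s.map sym)).plus.lang) {a : σ} (ha : w a ≠ 0) : a ∈ s := by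
  obtain ⟨l, -, hl, rfl⟩ := mem_lang_plus.1 hw
  obtain ⟨x, hxl, hxa⟩ := UWord.exists_mem_apply_ne_zero ha
  rcases eq_or_ne s [] with rfl | hs
  · exact absurd (hl x hxl) (by rintro rfl; exact hxa rfl)
  · obtain ⟨b, hb, rfl⟩ := (mem_lang_altList_map_sym hs).1 (hl x hxl)
    by_cases hab : a = b
    · exact hab ▸ hb
    · simp [UWord.single, hab] at hxa

theorem mem_lang_plus_altList_sym {s : List σ} {w : UWord σ} (hw₀ : ∃ a, w a ≠ 0)
    (hws : ∀ a, w a ≠ 0 → a ∈ s) : w ∈ (altList (s.map sym)).plus.lang := by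
  obtain ⟨a₀, ha₀⟩ := hw₀
  have hs : s ≠ [] := List.ne_nil_of_mem (hws a₀ ha₀)
  refine mem_lang_plus.2
    ⟨s.dedup.flatMap fun a => List.replicate (w a) (UWord.single a), ?_, ?_, ?_⟩
  · exact List.ne_nil_of_mem <| List.mem_flatMap.2
      ⟨a₀, List.mem_dedup.2 (hws a₀ ha₀), List.mem_replicate.2 ⟨ha₀, rfl⟩⟩
  · simp only [List.mem_flatMap, List.mem_replicate, List.mem_dedup]
    rintro x ⟨a, has, -, rfl⟩
    exact (mem_lang_altList_map_sym hs).2 ⟨a, has, rfl⟩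
  · rw [UWord.listSum_flatMap]
    simp_rw [UWord.listSum_replicate_single]
    exact (UWord.listSum_map_restrict w id (List.nodup_dedup s)
      fun a ha => List.mem_dedup.2 (hws a ha)).symm

end URE

section Clauses

variable {k n : ℕ} (lits : Fin k → Finset (Fin n × Bool))

/-- The symbols `a_{ij}` of `C_i`. -/
def clauseSymbols (i : Fin k) : List (Fin k × Fin n) :=
  ((List.finRange n).filter fun j => (j, true) ∈ lits i ∨ (j, false) ∈ lits i).map (Prod.mk i)

theorem mem_clauseSymbols {i i' : Fin k} {j : Fin n} :
    (i', j) ∈ clauseSymbols lits i ↔ i' = i ∧ usesVar lits i j := by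
  simp [clauseSymbols, usesVar, and_comm, eq_comm (a := i)]

theorem C10_eq (i : Fin k) :
    C10 lits i = (URE.altList ((clauseSymbols lits i).map URE.sym)).plus := by
  simp only [C10, clauseSymbols, List.map_map]
  rfl

theorem mem_lang_altList_C10 (hk : 0 < k) {x : UWord (Fin k × Fin n)} :
    x ∈ (URE.altList ((List.finRange k).map (C10 lits))).lang ↔
      ∃ i, x ∈ (C10 lits i).lang := by
  rw [URE.mem_lang_altList
    (List.ne_nil_of_mem (List.mem_map_of_mem (List.mem_finRange ⟨0, hk⟩)))]
  simp

theorem exists_row_eq_zero_of_mem_E10'lang (hk : 0 < k) {w : UWord (Fin k × Fin n)}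
    (hw : w ∈ E10'lang lits) : ∃ i, ∀ j, w (i, j) = 0 := by
  obtain ⟨l, hl, -, hlen, rfl⟩ := hw
  by_contra! hrows
  have hpieces : ∀ x ∈ l, ∃ i, ∀ p : Fin k × Fin n, x p ≠ 0 → p.1 = i := by
    intro x hx
    obtain ⟨i, hxi⟩ := (mem_lang_altList_C10 lits hk).1 (hl x hx)
    rw [C10_eq] at hxi
    exact ⟨i, fun p hp =>
      ((mem_clauseSymbols lits).1 (URE.mem_of_mem_lang_plus_altList_sym hxi hp)).1⟩
  have := UWord.card_le_length_of_forall_fiber Prod.fst hpieces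
    fun i => let ⟨j, hj⟩ := hrows i; ⟨(i, j), rfl, hj⟩
  rw [Fintype.card_fin] at this
  omega

theorem restrict_row_mem_lang_C10 {w : UWord (Fin k × Fin n)}
    (hw : ∀ i j, w (i, j) ≠ 0 → usesVar lits i j) {r : Fin k} {j : Fin n}
    (hj : w (r, j) ≠ 0) : w.restrict (·.1 = r) ∈ (C10 lits r).lang := by
  rw [C10_eq]
  refine URE.mem_lang_plus_altList_sym ⟨(r, j), by simpa [UWord.restrict] using hj⟩ ?_
  rintro ⟨r', j'⟩ h
  simp only [UWord.restrict] at h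
  split_ifs at h with hr
  · exact (mem_clauseSymbols lits).2 ⟨hr, hr ▸ hw r' j' h⟩
  · exact absurd rfl h

theorem mem_E10'lang_of_row_eq_zero {w : UWord (Fin k × Fin n)}
    (hw : ∀ i j, w (i, j) ≠ 0 → usesVar lits i j) (i : Fin k) (hi : ∀ j, w (i, j) = 0) :
    w ∈ E10'lang lits := by
  classical
  let rows := ((List.finRange k).erase i).filter fun r => ∃ j, w (r, j) ≠ 0
  refine ⟨rows.map fun r => w.restrict (·.1 = r), ?_, Nat.zero_le _, ?_, ?_⟩
  · simp only [List.mem_map]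
    rintro x ⟨r, hr, rfl⟩
    obtain ⟨j, hj⟩ := of_decide_eq_true (List.mem_filter.1 hr).2
    exact (mem_lang_altList_C10 lits i.pos).2 ⟨r, restrict_row_mem_lang_C10 lits hw hj⟩
  · rw [List.length_map]
    exact (List.length_filter_le _ _).trans (by simp)
  · refine (UWord.listSum_map_restrict w Prod.fst (((List.nodup_finRange k).erase i).filter _)
      ?_).symm
    rintro ⟨r, j⟩ hrj
    have hri : r ≠ i := by rintro rfl; exact hrj (hi j)
    simpa [rows, hri] using ⟨j, hrj⟩

end Clauses

theorem statement11_general (k n : ℕ) (hk : 0 < k) (lits : Fin k → Finset (Fin n × Bool))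
    (w : UWord (Fin k × Fin n))
    (hw : ∀ (i : Fin k) (j : Fin n), w (i, j) ≠ 0 → usesVar lits i j) :
    w ∈ E10'lang lits ↔
      (∃ i : Fin k, ∀ j : Fin n, usesVar lits i j → w (i, j) = 0) := by
  constructor
  · intro hmem
    obtain ⟨i, hi⟩ := exists_row_eq_zero_of_mem_E10'lang lits hk hmem
    exact ⟨i, fun j _ => hi j⟩
  · rintro ⟨i, hi⟩
    refine mem_E10'lang_of_row_eq_zero lits hw i fun j => ?_
    by_contra hj
    exact hj (hi j (hw i j hj))

/-- For a 3CNF formula `φ` in which each variable occurs at most once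
in each clause, and for every unordered word `w` over the alphabet
`{a_{ij} | clause c_i uses x_j or ¬x_j}`:  `w ∈ L(E'_φ)` if and only if there exists
`i ∈ {1,…,k}` such that none of the symbols occurring in `C_i` occurs in `w`. -/
theorem statement11 (k n : ℕ) (hk : 0 < k) (lits : Fin k → Finset (Fin n × Bool))
    (h3 : ∀ i : Fin k, (lits i).card = 3)
    (honce : ∀ (i : Fin k) (j : Fin n) (s s' : Bool),
        (j, s) ∈ lits i → (j, s') ∈ lits i → s = s')
    (w : UWord (Fin k × Fin n))
    (hw : ∀ (i : Fin k) (j : Fin n), w (i, j) ≠ 0 → usesVar lits i j) :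
    w ∈ E10'lang lits ↔
      (∃ i : Fin k, ∀ j : Fin n, usesVar lits i j → w (i, j) = 0) :=
  statement11_general k n hk lits w hw
end
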